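/- Let f : S → R be a ring homomorphism, let E be an (R,S)-injective R-module, let i : N → E be an (R,S)-monomorphism, and let μ : N → X be an (R,S)-essential (R,S)-monomorphism. Then there exists an (R,S)-monomorphism ξ : X → E with ξ ∘ μ = i. -/
import Mathlib


universe w

/-- `p : M → N` is an `(R,S)`-monomorphism: there is an `S`-linear retraction,
i.e. an additive map `q : N → M` satisfying `q (f s • n) = f s • q n`
(`S`-linearity for the `S`-module structures induced by `f`) with `q ∘ p = id`. -/
def IsRSMono {R S : Type*} [Ring R] [Ring S] (f : S →+* R)
    {M N : Type*} [AddCommGroup M] [AddCommGroup N] [Module R M] [Module R N]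
    (p : M →ₗ[R] N) : Prop :=
  ∃ q : N →+ M, (∀ (s : S) (n : N), q (f s • n) = f s • q n) ∧ ∀ m : M, q (p m) = m

/-- An `R`-module `M` is `(R,S)`-injective if every `R`-linear map `t : U → M`
extends along every `(R,S)`-monomorphism `u : U → V`. -/
def IsRSInjective {R S : Type*} [Ring R] [Ring S] (f : S →+* R)
    (M : Type w) [AddCommGroup M] [Module R M] : Prop :=
  ∀ (U V : Type w) [AddCommGroup U] [AddCommGroup V] [Module R U] [Module R V]
    (u : U →ₗ[R] V), IsRSMono f u →
      ∀ t : U →ₗ[R] M, ∃ s : V →ₗ[R] M, s.comp u = t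

/-- An `(R,S)`-monomorphism `σ : L → M` is `(R,S)`-essential if every `R`-linear
map `τ : M → N` such that `τ ∘ σ` is an `(R,S)`-monomorphism is itself an
`(R,S)`-monomorphism. -/
def IsRSEssential {R S : Type*} [Ring R] [Ring S] (f : S →+* R)
    {L M : Type w} [AddCommGroup L] [AddCommGroup M] [Module R L] [Module R M]
    (σ : L →ₗ[R] M) : Prop :=
  ∀ (N : Type w) [AddCommGroup N] [Module R N] (τ : M →ₗ[R] N),
    IsRSMono f (τ.comp σ) → IsRSMono f τ

/-- Given an `(R,S)`-injective module `E`, an `(R,S)`-monomorphism `i : N → E`,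
and an `(R,S)`-essential `(R,S)`-monomorphism `μ : N → X`, there is an
`(R,S)`-monomorphism `ξ : X → E` with `ξ ∘ μ = i`. -/
theorem exists_rsMono_extension {R S : Type*} [Ring R] [Ring S] (f : S →+* R)
    {N X E : Type w} [AddCommGroup N] [AddCommGroup X] [AddCommGroup E]
    [Module R N] [Module R X] [Module R E]
    (hE : IsRSInjective f E)
    (i : N →ₗ[R] E) (hi : IsRSMono f i)
    (μ : N →ₗ[R] X) (hμmono : IsRSMono f μ) (hμess : IsRSEssential f μ) :
    ∃ ξ : X →ₗ[R] E, IsRSMono f ξ ∧ ξ.comp μ = i := by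
  obtain ⟨ξ, hξ⟩ := hE N X μ hμmono i
  exact ⟨ξ, hμess E ξ (hξ ▸ hi), hξ⟩
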